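/- arXiv:math/0608041 — 4 statements merged into one kernel-verified Lean document; each statement's English description precedes it below -/
import Mathlib

section
/- For the Moran process transition matrix M with absorbing states 0 and N and strictly positive interior transition probabilities c_±(n,N) > 0 for 0 < n < N, the powers M^κ converge as κ → ∞ to the matrix whose first row is (1, 1-F_1, ..., 1-F_{N-1}, 0), whose last row is (0, F_1, ..., F_{N-1}, 1), and whose other rows are zero, where F_n is the fixation probability starting from n type-I individuals. -/
open Filter Finset

/-- The powers of the Moran transition matrix converge to the matrix whose
first row is `(1, 1 - F 1, …, 1 - F (N-1), 0)`, whose last row is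
`(0, F 1, …, F (N-1), 1)` and whose remaining rows vanish, where `F` is the
fixation probability vector (left `1`-eigenvector with `F 0 = 0`, `F N = 1`). -/
theorem moran_power_limit
    (N : ℕ) (hN : 1 ≤ N)
    (M : Matrix (Fin (N + 1)) (Fin (N + 1)) ℝ)
    (hnonneg : ∀ i j, 0 ≤ M i j)
    (hstoch : ∀ j, ∑ i, M i j = 1)
    (htri : ∀ i j : Fin (N + 1), (i.val + 1 < j.val ∨ j.val + 1 < i.val) → M i j = 0)
    (habs0 : ∀ i, M i 0 = if i = 0 then 1 else 0)
    (habsN : ∀ i, M i (Fin.last N) = if i = Fin.last N then 1 else 0)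
    (hplus : ∀ i j : Fin (N + 1), 0 < j.val → j.val < N → i.val = j.val + 1 → 0 < M i j)
    (hminus : ∀ i j : Fin (N + 1), 0 < j.val → j.val < N → i.val + 1 = j.val → 0 < M i j)
    (F : Fin (N + 1) → ℝ)
    (hF : M.transpose.mulVec F = F)
    (hF0 : F 0 = 0) (hFN : F (Fin.last N) = 1) :
    Filter.Tendsto (fun κ : ℕ => M ^ κ) Filter.atTop
      (nhds (Matrix.of fun i j =>
        if i = 0 then 1 - F j else if i = Fin.last N then F j else 0)) := by
  have hNpos : 0 < N := hN
  have h0l : (0 : Fin (N + 1)) ≠ Fin.last N := by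
    intro h
    have := congrArg Fin.val h
    simp [Fin.last] at this
    omega
  -- powers preserve the absorbing columns
  have hpow0 : ∀ (κ : ℕ) (i : Fin (N + 1)), (M ^ κ) i 0 = if i = 0 then 1 else 0 := by
    intro κ
    induction κ with
    | zero => intro i; simp [Matrix.one_apply]
    | succ n ih =>
      intro i
      rw [pow_succ, Matrix.mul_apply]
      simp [habs0, mul_ite, ih]
  have hpowN : ∀ (κ : ℕ) (i : Fin (N + 1)),
      (M ^ κ) i (Fin.last N) = if i = Fin.last N then 1 else 0 := by
    intro κ
    induction κ with
    | zero => intro i; simp [Matrix.one_apply]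
    | succ n ih =>
      intro i
      rw [pow_succ, Matrix.mul_apply]
      simp [habsN, mul_ite, ih]
  -- powers are nonnegative
  have hpownn : ∀ (κ : ℕ) (i j : Fin (N + 1)), 0 ≤ (M ^ κ) i j := by
    intro κ
    induction κ with
    | zero => intro i j; rw [pow_zero, Matrix.one_apply]; split <;> norm_num
    | succ n ih =>
      intro i j
      rw [pow_succ, Matrix.mul_apply]
      exact Finset.sum_nonneg fun k _ => mul_nonneg (ih i k) (hnonneg k j)
  -- columns of powers sum to 1
  have hpowsum : ∀ (κ : ℕ) (j : Fin (N + 1)), ∑ i, (M ^ κ) i j = 1 := by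
    intro κ
    induction κ with
    | zero => intro j; simp [Matrix.one_apply]
    | succ n ih =>
      intro j
      rw [pow_succ]
      simp only [Matrix.mul_apply]
      rw [Finset.sum_comm]
      simp only [← Finset.sum_mul, ih, one_mul]
      exact hstoch j
  -- F is harmonic for all powers
  have hF' : ∀ j, ∑ k, M k j * F k = F j := by
    intro j
    have := congrFun hF j
    simpa [Matrix.mulVec, dotProduct, Matrix.transpose_apply] using this
  have hharm : ∀ (κ : ℕ) (j : Fin (N + 1)), ∑ k, (M ^ κ) k j * F k = F j := by
    intro κ
    induction κ with
    | zero => intro j; simp [Matrix.one_apply, ite_mul]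
    | succ n ih =>
      intro j
      rw [pow_succ]
      simp only [Matrix.mul_apply, Finset.sum_mul]
      rw [Finset.sum_comm]
      have : ∀ l : Fin (N + 1), ∑ k, (M ^ n) k l * M l j * F k = M l j * F l := by
        intro l
        rw [← ih l, Finset.mul_sum]
        exact Finset.sum_congr rfl fun k _ => by ring
      rw [Finset.sum_congr rfl fun l _ => this l]
      exact hF' j
  -- positive probability of reaching 0
  have hreach : ∀ (κ : ℕ) (j : Fin (N + 1)), j.val < N → j.val ≤ κ → 0 < (M ^ κ) 0 j := by
    intro κ
    induction κ with
    | zero =>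
      intro j hjN hj0
      have hj : j = 0 := by
        apply Fin.ext
        simp only [Fin.val_zero]
        omega
      subst hj
      simp [Matrix.one_apply]
    | succ n ih =>
      intro j hjN hjn
      by_cases hj0 : j = 0
      · subst hj0; rw [hpow0]; simp
      · have hjval : 0 < j.val := by
          rcases Nat.eq_zero_or_pos j.val with h | h
          · exact absurd (Fin.ext h) hj0
          · exact h
        set k : Fin (N + 1) := ⟨j.val - 1, by omega⟩ with hk
        rw [pow_succ, Matrix.mul_apply]
        apply Finset.sum_pos' (fun l _ => mul_nonneg (hpownn n 0 l) (hnonneg l j))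
        refine ⟨k, Finset.mem_univ k, mul_pos (ih k (by simp [hk]; omega) (by simp [hk]; omega))
          (hminus k j hjval hjN (by simp [hk]; omega))⟩
  -- the uniform absorption bound
  have hne : (Finset.univ.filter (fun j : Fin (N + 1) => j.val < N)).Nonempty :=
    ⟨0, by simp; omega⟩
  set δ : ℝ := (Finset.univ.filter (fun j : Fin (N + 1) => j.val < N)).inf' hne
      (fun j => (M ^ N) 0 j) with hδ
  have hδpos : 0 < δ := by
    rw [hδ, Finset.lt_inf'_iff]
    intro j hj
    rw [Finset.mem_filter] at hj
    exact hreach N j hj.2 (le_of_lt hj.2)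
  have hδle : δ ≤ 1 := by
    have h0mem : (0 : Fin (N + 1)) ∈ Finset.univ.filter (fun j : Fin (N + 1) => j.val < N) := by
      simp; omega
    have := Finset.inf'_le (fun j => (M ^ N) 0 j) h0mem
    rw [hδ]
    calc (Finset.univ.filter (fun j : Fin (N + 1) => j.val < N)).inf' hne (fun j => (M ^ N) 0 j)
        ≤ (M ^ N) 0 0 := this
      _ = 1 := by rw [hpow0]; simp
  set c : ℝ := 1 - δ with hc
  have hc0 : 0 ≤ c := by rw [hc]; linarith
  have hc1 : c < 1 := by rw [hc]; linarith
  -- interior states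
  set Int : Finset (Fin (N + 1)) := Finset.univ \ {0, Fin.last N} with hInt
  have hmemInt : ∀ i : Fin (N + 1), i ∈ Int ↔ i ≠ 0 ∧ i ≠ Fin.last N := by
    intro i; simp [hInt]
  have hsplit : ∀ f : Fin (N + 1) → ℝ,
      ∑ i, f i = f 0 + f (Fin.last N) + ∑ i ∈ Int, f i := by
    intro f
    have hsub : ({0, Fin.last N} : Finset (Fin (N + 1))) ⊆ Finset.univ :=
      Finset.subset_univ _
    rw [← Finset.sum_sdiff hsub, Finset.sum_pair h0l, hInt]
    ring
  -- composition identity for the interior mass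
  have hcomp : ∀ (m κ : ℕ) (j : Fin (N + 1)),
      ∑ i ∈ Int, (M ^ (m + κ)) i j
        = ∑ k ∈ Int, (∑ i ∈ Int, (M ^ m) i k) * (M ^ κ) k j := by
    intro m κ j
    rw [pow_add]
    simp only [Matrix.mul_apply]
    rw [Finset.sum_comm]
    have h1 : ∀ k : Fin (N + 1), ∑ i ∈ Int, (M ^ m) i k * (M ^ κ) k j
        = (∑ i ∈ Int, (M ^ m) i k) * (M ^ κ) k j := by
      intro k; rw [Finset.sum_mul]
    rw [Finset.sum_congr rfl fun k _ => h1 k]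
    rw [hsplit (fun k => (∑ i ∈ Int, (M ^ m) i k) * (M ^ κ) k j)]
    have hz0 : (∑ i ∈ Int, (M ^ m) i 0) = 0 := by
      apply Finset.sum_eq_zero
      intro i hi
      rw [hpow0, if_neg ((hmemInt i).1 hi).1]
    have hzN : (∑ i ∈ Int, (M ^ m) i (Fin.last N)) = 0 := by
      apply Finset.sum_eq_zero
      intro i hi
      rw [hpowN, if_neg ((hmemInt i).1 hi).2]
    rw [hz0, hzN]
    ring
  have hSnn : ∀ (κ : ℕ) (j : Fin (N + 1)), 0 ≤ ∑ i ∈ Int, (M ^ κ) i j :=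
    fun κ j => Finset.sum_nonneg fun i _ => hpownn κ i j
  have hSle1 : ∀ (κ : ℕ) (j : Fin (N + 1)), ∑ i ∈ Int, (M ^ κ) i j ≤ 1 := by
    intro κ j
    have := hpowsum κ j
    rw [hsplit (fun i => (M ^ κ) i j)] at this
    have h1 := hpownn κ 0 j
    have h2 := hpownn κ (Fin.last N) j
    linarith
  -- contraction after N steps
  have hstepN : ∀ (κ : ℕ) (j : Fin (N + 1)),
      ∑ i ∈ Int, (M ^ (κ + N)) i j ≤ c * ∑ i ∈ Int, (M ^ κ) i j := by
    intro κ j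
    rw [add_comm κ N, hcomp N κ j, Finset.mul_sum]
    apply Finset.sum_le_sum
    intro k hk
    have hkN : k.val < N := by
      have hkl := ((hmemInt k).1 hk).2
      have : k.val ≠ N := fun h => hkl (Fin.ext (by simp [Fin.last, h]))
      omega
    have hkmem : k ∈ Finset.univ.filter (fun j : Fin (N + 1) => j.val < N) := by
      simp [hkN]
    have hδk : δ ≤ (M ^ N) 0 k := by
      rw [hδ]; exact Finset.inf'_le _ hkmem
    have hcoef : ∑ i ∈ Int, (M ^ N) i k ≤ c := by
      have := hpowsum N k
      rw [hsplit (fun i => (M ^ N) i k)] at this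
      have h2 := hpownn N (Fin.last N) k
      rw [hc]
      linarith
    exact mul_le_mul_of_nonneg_right hcoef (hpownn κ k j)
  -- geometric decay
  have hgeo : ∀ (κ : ℕ) (j : Fin (N + 1)),
      ∑ i ∈ Int, (M ^ κ) i j ≤ c ^ (κ / N) := by
    intro κ
    induction κ using Nat.strong_induction_on with
    | _ κ ih =>
      intro j
      by_cases hκ : κ < N
      · rw [Nat.div_eq_of_lt hκ, pow_zero]
        exact hSle1 κ j
      · push_neg at hκ
        obtain ⟨d, rfl⟩ : ∃ d, κ = d + N := ⟨κ - N, by omega⟩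
        rw [Nat.add_div_right d hNpos, pow_succ]
        calc ∑ i ∈ Int, (M ^ (d + N)) i j ≤ c * ∑ i ∈ Int, (M ^ d) i j := hstepN d j
          _ ≤ c * c ^ (d / N) :=
            mul_le_mul_of_nonneg_left (ih d (by omega) j) hc0
          _ = c ^ (d / N) * c := mul_comm _ _
  -- the interior mass tends to zero
  have hdivtend : Tendsto (fun κ : ℕ => κ / N) atTop atTop := by
    apply Filter.tendsto_atTop_atTop.2
    intro b
    refine ⟨b * N, fun a ha => ?_⟩
    exact (Nat.le_div_iff_mul_le hNpos).2 ha
  have hctend : Tendsto (fun κ : ℕ => c ^ (κ / N)) atTop (nhds 0) :=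
    (tendsto_pow_atTop_nhds_zero_of_lt_one hc0 hc1).comp hdivtend
  have hStend : ∀ j, Tendsto (fun κ => ∑ i ∈ Int, (M ^ κ) i j) atTop (nhds 0) := by
    intro j
    exact squeeze_zero (fun κ => hSnn κ j) (fun κ => hgeo κ j) hctend
  -- each interior entry tends to zero
  have hEntry : ∀ (i j : Fin (N + 1)), i ∈ Int →
      Tendsto (fun κ => (M ^ κ) i j) atTop (nhds 0) := by
    intro i j hi
    apply squeeze_zero (fun κ => hpownn κ i j)
      (fun κ => Finset.single_le_sum (fun k (_ : k ∈ Int) => hpownn κ k j) hi) (hStend j)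
  -- last row converges to F
  have hLast : ∀ j, Tendsto (fun κ => (M ^ κ) (Fin.last N) j) atTop (nhds (F j)) := by
    intro j
    have heq : ∀ κ, (M ^ κ) (Fin.last N) j = F j - ∑ k ∈ Int, (M ^ κ) k j * F k := by
      intro κ
      have := hharm κ j
      rw [hsplit (fun k => (M ^ κ) k j * F k)] at this
      rw [hF0, hFN] at this
      linarith [this]
    simp only [heq]
    have hsum : Tendsto (fun κ => ∑ k ∈ Int, (M ^ κ) k j * F k) atTop (nhds 0) := by
      have : Tendsto (fun κ => ∑ k ∈ Int, (M ^ κ) k j * F k) atTop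
          (nhds (∑ k ∈ Int, (0 : ℝ))) := by
        apply tendsto_finset_sum
        intro k hk
        have := (hEntry k j hk).mul_const (F k)
        simpa using this
      simpa using this
    have := (tendsto_const_nhds (x := F j) (f := atTop (α := ℕ))).sub hsum
    simpa using this
  -- first row converges to 1 - F
  have hFirst : ∀ j, Tendsto (fun κ => (M ^ κ) 0 j) atTop (nhds (1 - F j)) := by
    intro j
    have heq : ∀ κ, (M ^ κ) 0 j
        = 1 - (M ^ κ) (Fin.last N) j - ∑ k ∈ Int, (M ^ κ) k j := by
      intro κ
      have := hpowsum κ j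
      rw [hsplit (fun k => (M ^ κ) k j)] at this
      linarith [this]
    simp only [heq]
    have h1 : Tendsto (fun κ : ℕ => 1 - (M ^ κ) (Fin.last N) j) atTop (nhds (1 - F j)) :=
      (tendsto_const_nhds).sub (hLast j)
    have := h1.sub (hStend j)
    simpa using this
  -- assemble
  apply tendsto_pi_nhds.2
  intro i
  apply tendsto_pi_nhds.2
  intro j
  simp only [Matrix.of_apply]
  by_cases hi0 : i = 0
  · subst hi0
    simp only [if_pos rfl]
    exact hFirst j
  · by_cases hil : i = Fin.last N
    · subst hil
      rw [if_neg (fun h => h0l h.symm), if_pos rfl]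
      exact hLast j
    · rw [if_neg hi0, if_neg hil]
      exact hEntry i j ((hmemInt i).2 ⟨hi0, hil⟩)
end

section
/- For the Moran process with any normalized initial probability distribution P_0 = (P(0,0,N),...,P(0,N,N)), the limit of M^κ P_0 as κ → ∞ equals (1-A, 0, ..., 0, A), where A = Σ_{n=0}^N F_n P(0,n,N). In particular, with probability 1 the population reaches a homogeneous state (fixation or loss). -/
open Matrix Finset Filter

namespace MoranAux

variable {N : ℕ} (M : Matrix (Fin (N + 1)) (Fin (N + 1)) ℝ)

lemma pow_entry_nonneg (h : ∀ i j, 0 ≤ M i j) (κ : ℕ) (i j : Fin (N + 1)) :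
    0 ≤ (M ^ κ) i j := by
  induction κ generalizing i j with
  | zero => rw [pow_zero]; by_cases hij : i = j <;> simp [Matrix.one_apply, hij]
  | succ n ih =>
      rw [pow_succ, Matrix.mul_apply]
      exact Finset.sum_nonneg fun k _ => mul_nonneg (ih i k) (h k j)

lemma pow_colsum (hstoch : ∀ j, ∑ i, M i j = 1) (κ : ℕ) (j : Fin (N + 1)) :
    ∑ i, (M ^ κ) i j = 1 := by
  induction κ generalizing j with
  | zero => simp [Matrix.one_apply, Finset.sum_ite_eq]
  | succ n ih =>
      rw [pow_succ]
      simp only [Matrix.mul_apply]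
      rw [Finset.sum_comm]
      have : ∀ k : Fin (N+1), ∑ i, (M ^ n) i k * M k j = M k j := by
        intro k
        rw [← Finset.sum_mul, ih k, one_mul]
      rw [Finset.sum_congr rfl fun k _ => this k, hstoch j]

lemma pow_col0 (habs0 : ∀ i, M i 0 = if i = 0 then 1 else 0) (κ : ℕ) (i : Fin (N + 1)) :
    (M ^ κ) i 0 = if i = 0 then 1 else 0 := by
  induction κ generalizing i with
  | zero => simp [Matrix.one_apply]
  | succ n ih =>
      rw [pow_succ, Matrix.mul_apply]
      simp only [habs0, mul_ite, mul_one, mul_zero]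
      rw [Finset.sum_ite_eq' Finset.univ 0 (fun k => (M ^ n) i k)]
      simp [ih i]

lemma pow_colN (habsN : ∀ i, M i (Fin.last N) = if i = Fin.last N then 1 else 0)
    (κ : ℕ) (i : Fin (N + 1)) :
    (M ^ κ) i (Fin.last N) = if i = Fin.last N then 1 else 0 := by
  induction κ generalizing i with
  | zero => simp [Matrix.one_apply]
  | succ n ih =>
      rw [pow_succ, Matrix.mul_apply]
      simp only [habsN, mul_ite, mul_one, mul_zero]
      rw [Finset.sum_ite_eq' Finset.univ (Fin.last N) (fun k => (M ^ n) i k)]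
      simp [ih i]

end MoranAux

namespace MoranAux

lemma pow_reach0 {N : ℕ} (M : Matrix (Fin (N + 1)) (Fin (N + 1)) ℝ)
    (hnonneg : ∀ i j, 0 ≤ M i j)
    (habs0 : ∀ i, M i 0 = if i = 0 then 1 else 0)
    (hminus : ∀ i j : Fin (N + 1), 0 < j.val → j.val < N → i.val + 1 = j.val → 0 < M i j)
    (j : Fin (N + 1)) (h0 : 0 < j.val) (hjN : j.val < N) :
    0 < (M ^ N) 0 j := by
  -- first: 0 < (M ^ j.val) 0 j
  have key : ∀ m : ℕ, ∀ j : Fin (N + 1), j.val = m → 0 < m → m < N → 0 < (M ^ m) 0 j := by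
    intro m
    induction m with
    | zero => intro j h h0 _; omega
    | succ n ih =>
        intro j hj _ hmN
        rcases Nat.eq_zero_or_pos n with hn | hn
        · subst hn
          rw [pow_one]
          exact hminus 0 j (by omega) (by omega) (by simp; omega)
        · set j' : Fin (N + 1) := ⟨n, by omega⟩ with hj'
          have h1 : 0 < (M ^ n) 0 j' := ih j' rfl hn (by omega)
          have h2 : 0 < M j' j := hminus j' j (by omega) (by omega) (by simp [hj']; omega)
          rw [pow_succ, Matrix.mul_apply]
          have hle : (M ^ n) 0 j' * M j' j ≤ ∑ k, (M ^ n) 0 k * M k j :=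
            Finset.single_le_sum (fun k _ => mul_nonneg (pow_entry_nonneg M hnonneg n 0 k) (hnonneg k j))
              (Finset.mem_univ j')
          exact lt_of_lt_of_le (mul_pos h1 h2) hle
  have h1 : 0 < (M ^ j.val) 0 j := key j.val j rfl h0 hjN
  have hsplit : (M : Matrix (Fin (N+1)) (Fin (N+1)) ℝ) ^ N = M ^ (N - j.val) * M ^ j.val := by
    rw [← pow_add]; congr 1; omega
  rw [hsplit, Matrix.mul_apply]
  have hterm : 0 < (M ^ (N - j.val)) 0 0 * (M ^ j.val) 0 j := by
    rw [pow_col0 M habs0]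
    simp [h1]
  refine lt_of_lt_of_le hterm ?_
  exact Finset.single_le_sum
    (fun k _ => mul_nonneg (pow_entry_nonneg M hnonneg _ 0 k) (pow_entry_nonneg M hnonneg _ k j))
    (Finset.mem_univ 0)

end MoranAux

namespace MoranAux

def intr (N : ℕ) : Finset (Fin (N + 1)) := ({0, Fin.last N} : Finset (Fin (N + 1)))ᶜ

lemma mem_intr {N : ℕ} (i : Fin (N + 1)) : i ∈ intr N ↔ i ≠ 0 ∧ i ≠ Fin.last N := by
  simp [intr, Finset.mem_compl]

/-- generic bound: interior mass of `B.mulVec v` in terms of column interior masses -/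
lemma intmass_mulVec {N : ℕ} (B : Matrix (Fin (N + 1)) (Fin (N + 1)) ℝ)
    (hcol0 : ∀ i, i ≠ 0 → B i 0 = 0)
    (hcolN : ∀ i, i ≠ Fin.last N → B i (Fin.last N) = 0)
    (v : Fin (N + 1) → ℝ) :
    ∑ i ∈ intr N, B.mulVec v i = ∑ j ∈ intr N, (∑ i ∈ intr N, B i j) * v j := by
  have : ∑ i ∈ intr N, B.mulVec v i = ∑ j, (∑ i ∈ intr N, B i j) * v j := by
    simp only [Matrix.mulVec, dotProduct]
    rw [Finset.sum_comm]
    exact Finset.sum_congr rfl fun j _ => by rw [Finset.sum_mul]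
  rw [this]
  refine (Finset.sum_subset (Finset.subset_univ _) ?_).symm
  intro j _ hj
  rw [mem_intr] at hj
  push_neg at hj
  by_cases hj0 : j = 0
  · subst hj0
    rw [Finset.sum_eq_zero, zero_mul]
    intro i hi
    exact hcol0 i ((mem_intr i).1 hi).1
  · rw [hj hj0, Finset.sum_eq_zero, zero_mul]
    intro i hi
    exact hcolN i ((mem_intr i).1 hi).2

lemma intmass_step {N : ℕ} (M : Matrix (Fin (N + 1)) (Fin (N + 1)) ℝ)
    (hnonneg : ∀ i j, 0 ≤ M i j)
    (hstoch : ∀ j, ∑ i, M i j = 1)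
    (habs0 : ∀ i, M i 0 = if i = 0 then 1 else 0)
    (habsN : ∀ i, M i (Fin.last N) = if i = Fin.last N then 1 else 0)
    (v : Fin (N + 1) → ℝ) (hv : ∀ n, 0 ≤ v n) :
    ∑ i ∈ intr N, M.mulVec v i ≤ ∑ j ∈ intr N, v j := by
  rw [intmass_mulVec M (fun i hi => by simp [habs0, hi]) (fun i hi => by simp [habsN, hi]) v]
  refine Finset.sum_le_sum fun j _ => ?_
  have h1 : ∑ i ∈ intr N, M i j ≤ 1 := by
    rw [← hstoch j]
    exact Finset.sum_le_sum_of_subset_of_nonneg (Finset.subset_univ _)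
      (fun i _ _ => hnonneg i j)
  calc (∑ i ∈ intr N, M i j) * v j ≤ 1 * v j :=
        mul_le_mul_of_nonneg_right h1 (hv j)
    _ = v j := one_mul _

end MoranAux

namespace MoranAux

lemma intmass_contract {N : ℕ} (M : Matrix (Fin (N + 1)) (Fin (N + 1)) ℝ)
    (hnonneg : ∀ i j, 0 ≤ M i j)
    (hstoch : ∀ j, ∑ i, M i j = 1)
    (habs0 : ∀ i, M i 0 = if i = 0 then 1 else 0)
    (habsN : ∀ i, M i (Fin.last N) = if i = Fin.last N then 1 else 0)
    (hminus : ∀ i j : Fin (N + 1), 0 < j.val → j.val < N → i.val + 1 = j.val → 0 < M i j) :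
    ∃ c : ℝ, 0 ≤ c ∧ c < 1 ∧ ∀ v : Fin (N + 1) → ℝ, (∀ n, 0 ≤ v n) →
      ∑ i ∈ intr N, (M ^ N).mulVec v i ≤ c * ∑ j ∈ intr N, v j := by
  set t : Fin (N + 1) → ℝ := fun j => ∑ i ∈ intr N, (M ^ N) i j with ht
  have htlt : ∀ j ∈ intr N, t j < 1 := by
    intro j hj
    rw [mem_intr] at hj
    have hj0 : 0 < j.val := by
      rcases Nat.eq_zero_or_pos j.val with h | h
      · exact absurd (Fin.ext h) hj.1
      · exact h
    have hjN : j.val < N := by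
      have := j.isLt
      rcases Nat.lt_or_ge j.val N with h | h
      · exact h
      · exact absurd (Fin.ext (show j.val = (Fin.last N).val by rw [Fin.val_last]; omega)) hj.2
    have hpos : 0 < (M ^ N) 0 j := pow_reach0 M hnonneg habs0 hminus j hj0 hjN
    have hsub : intr N ⊆ Finset.univ.erase 0 := by
      intro i hi
      rw [mem_intr] at hi
      exact Finset.mem_erase.2 ⟨hi.1, Finset.mem_univ i⟩
    have h1 : t j ≤ ∑ i ∈ Finset.univ.erase 0, (M ^ N) i j :=
      Finset.sum_le_sum_of_subset_of_nonneg hsub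
        (fun i _ _ => pow_entry_nonneg M hnonneg N i j)
    have h2 : (M ^ N) 0 j + ∑ i ∈ Finset.univ.erase 0, (M ^ N) i j = 1 := by
      rw [Finset.add_sum_erase Finset.univ (fun i => (M ^ N) i j) (Finset.mem_univ 0)]
      exact pow_colsum M hstoch N j
    linarith
  by_cases hS : (intr N).Nonempty
  · refine ⟨(intr N).sup' hS t, ?_, ?_, ?_⟩
    · obtain ⟨j0, hj0⟩ := hS
      exact le_trans (Finset.sum_nonneg fun i _ => pow_entry_nonneg M hnonneg N i j0)
        (Finset.le_sup' t hj0)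
    · exact (Finset.sup'_lt_iff hS).2 htlt
    · intro v hv
      rw [intmass_mulVec (M ^ N) (fun i hi => by rw [pow_col0 M habs0]; simp [hi])
          (fun i hi => by rw [pow_colN M habsN]; simp [hi]) v]
      rw [Finset.mul_sum]
      refine Finset.sum_le_sum fun j hj => ?_
      exact mul_le_mul_of_nonneg_right (Finset.le_sup' t hj) (hv j)
  · refine ⟨0, le_refl 0, one_pos, fun v hv => ?_⟩
    rw [Finset.not_nonempty_iff_eq_empty] at hS
    simp [hS]

end MoranAux

namespace MoranAux

lemma mulVec_nonneg {N : ℕ} (M : Matrix (Fin (N + 1)) (Fin (N + 1)) ℝ)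
    (h : ∀ i j, 0 ≤ M i j) (v : Fin (N + 1) → ℝ) (hv : ∀ n, 0 ≤ v n) (i : Fin (N + 1)) :
    0 ≤ M.mulVec v i := by
  simp only [Matrix.mulVec, dotProduct]
  exact Finset.sum_nonneg fun j _ => mul_nonneg (h i j) (hv j)

lemma intmass_iter {N : ℕ} (M : Matrix (Fin (N + 1)) (Fin (N + 1)) ℝ)
    (hnonneg : ∀ i j, 0 ≤ M i j)
    (hstoch : ∀ j, ∑ i, M i j = 1)
    (habs0 : ∀ i, M i 0 = if i = 0 then 1 else 0)
    (habsN : ∀ i, M i (Fin.last N) = if i = Fin.last N then 1 else 0)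
    (r : ℕ) (v : Fin (N + 1) → ℝ) (hv : ∀ n, 0 ≤ v n) :
    ∑ i ∈ intr N, (M ^ r).mulVec v i ≤ ∑ j ∈ intr N, v j := by
  induction r with
  | zero => rw [pow_zero, Matrix.one_mulVec]
  | succ n ih =>
      rw [pow_succ', ← Matrix.mulVec_mulVec]
      refine le_trans (intmass_step M hnonneg hstoch habs0 habsN _ ?_) ih
      exact fun n' => mulVec_nonneg _ (pow_entry_nonneg M hnonneg n) v hv n'

lemma harm_step {N : ℕ} (M : Matrix (Fin (N + 1)) (Fin (N + 1)) ℝ)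
    (F : Fin (N + 1) → ℝ) (hF : M.transpose.mulVec F = F) (v : Fin (N + 1) → ℝ) :
    ∑ n, F n * M.mulVec v n = ∑ n, F n * v n := by
  have hcol : ∀ j, ∑ i, M i j * F i = F j := by
    intro j
    have := congrFun hF j
    simpa [Matrix.mulVec, dotProduct, Matrix.transpose_apply] using this
  simp only [Matrix.mulVec, dotProduct]
  calc ∑ n, F n * ∑ j, M n j * v j = ∑ n, ∑ j, F n * (M n j * v j) := by
        exact Finset.sum_congr rfl fun n _ => Finset.mul_sum _ _ _
    _ = ∑ j, ∑ n, F n * (M n j * v j) := Finset.sum_comm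
    _ = ∑ j, (∑ n, M n j * F n) * v j := by
        refine Finset.sum_congr rfl fun j _ => ?_
        rw [Finset.sum_mul]
        exact Finset.sum_congr rfl fun n _ => by ring
    _ = ∑ j, F j * v j := Finset.sum_congr rfl fun j _ => by rw [hcol j]

end MoranAux

open MoranAux Filter in
/-- For any normalized initial distribution `P₀`, the Moran iteration `M ^ κ P₀`
converges to `(1 - A, 0, …, 0, A)` where `A = ∑ F n * P₀ n` is the fixation
probability of the initial condition: with probability one the population ends
in a homogeneous state. -/
theorem moran_final_state
    (N : ℕ) (hN : 1 ≤ N)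
    (M : Matrix (Fin (N + 1)) (Fin (N + 1)) ℝ)
    (hnonneg : ∀ i j, 0 ≤ M i j)
    (hstoch : ∀ j, ∑ i, M i j = 1)
    (htri : ∀ i j : Fin (N + 1), (i.val + 1 < j.val ∨ j.val + 1 < i.val) → M i j = 0)
    (habs0 : ∀ i, M i 0 = if i = 0 then 1 else 0)
    (habsN : ∀ i, M i (Fin.last N) = if i = Fin.last N then 1 else 0)
    (hplus : ∀ i j : Fin (N + 1), 0 < j.val → j.val < N → i.val = j.val + 1 → 0 < M i j)
    (hminus : ∀ i j : Fin (N + 1), 0 < j.val → j.val < N → i.val + 1 = j.val → 0 < M i j)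
    (F : Fin (N + 1) → ℝ)
    (hF : M.transpose.mulVec F = F)
    (hF0 : F 0 = 0) (hFN : F (Fin.last N) = 1)
    (P₀ : Fin (N + 1) → ℝ)
    (hP₀nonneg : ∀ n, 0 ≤ P₀ n)
    (hP₀norm : ∑ n, P₀ n = 1) :
    Filter.Tendsto (fun κ : ℕ => (M ^ κ).mulVec P₀) Filter.atTop
      (nhds (fun i =>
        if i = 0 then 1 - ∑ n, F n * P₀ n
        else if i = Fin.last N then ∑ n, F n * P₀ n else 0)) := by
  classical
  set A := ∑ n, F n * P₀ n with hA
  set v : ℕ → Fin (N + 1) → ℝ := fun κ => (M ^ κ).mulVec P₀ with hvdef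
  have h0last : (0 : Fin (N + 1)) ≠ Fin.last N := by
    intro h
    have := congrArg Fin.val h
    rw [Fin.val_zero, Fin.val_last] at this
    omega
  have hvnonneg : ∀ κ n, 0 ≤ v κ n := fun κ n =>
    mulVec_nonneg _ (pow_entry_nonneg M hnonneg κ) P₀ hP₀nonneg n
  have hmass : ∀ κ, ∑ n, v κ n = 1 := by
    intro κ
    simp only [hvdef, Matrix.mulVec, dotProduct]
    rw [Finset.sum_comm]
    calc ∑ j, ∑ n, (M ^ κ) n j * P₀ j
        = ∑ j : Fin (N + 1), P₀ j := by
          refine Finset.sum_congr rfl fun j _ => ?_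
          rw [← Finset.sum_mul, pow_colsum M hstoch κ j, one_mul]
      _ = 1 := hP₀norm
  have hsucc : ∀ κ, v (κ + 1) = M.mulVec (v κ) := by
    intro κ
    simp only [hvdef]
    rw [pow_succ', ← Matrix.mulVec_mulVec]
  -- split of a full sum into 0, last, interior
  have hsplit : ∀ f : Fin (N + 1) → ℝ,
      ∑ n, f n = f 0 + f (Fin.last N) + ∑ i ∈ intr N, f i := by
    intro f
    have h1 : ∑ i ∈ ({0, Fin.last N} : Finset (Fin (N + 1))), f i
        + ∑ i ∈ intr N, f i = ∑ i, f i := Finset.sum_add_sum_compl _ _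
    rw [Finset.sum_pair h0last] at h1
    linarith
  -- monotone absorbing coordinates
  have hstep0 : ∀ κ, v κ 0 ≤ v (κ + 1) 0 := by
    intro κ
    rw [hsucc κ]
    have : M.mulVec (v κ) 0 = ∑ j, M 0 j * v κ j := rfl
    rw [this]
    have h00 : M 0 0 = 1 := by rw [habs0]; simp
    calc v κ 0 = M 0 0 * v κ 0 := by rw [h00, one_mul]
      _ ≤ ∑ j, M 0 j * v κ j :=
        Finset.single_le_sum (fun j _ => mul_nonneg (hnonneg 0 j) (hvnonneg κ j))
          (Finset.mem_univ 0)
  have hstepN : ∀ κ, v κ (Fin.last N) ≤ v (κ + 1) (Fin.last N) := by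
    intro κ
    rw [hsucc κ]
    have : M.mulVec (v κ) (Fin.last N) = ∑ j, M (Fin.last N) j * v κ j := rfl
    rw [this]
    have hll : M (Fin.last N) (Fin.last N) = 1 := by rw [habsN]; simp
    calc v κ (Fin.last N) = M (Fin.last N) (Fin.last N) * v κ (Fin.last N) := by
          rw [hll, one_mul]
      _ ≤ ∑ j, M (Fin.last N) j * v κ j :=
        Finset.single_le_sum (fun j _ => mul_nonneg (hnonneg _ j) (hvnonneg κ j))
          (Finset.mem_univ _)
  have hbdd : ∀ κ n, v κ n ≤ 1 := by
    intro κ n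
    rw [← hmass κ]
    exact Finset.single_le_sum (fun j _ => hvnonneg κ j) (Finset.mem_univ n)
  have hmono0 : Monotone fun κ => v κ 0 := monotone_nat_of_le_succ hstep0
  have hmonoN : Monotone fun κ => v κ (Fin.last N) := monotone_nat_of_le_succ hstepN
  set L0 := ⨆ κ, v κ 0 with hL0
  set LN := ⨆ κ, v κ (Fin.last N) with hLN
  have ht0 : Tendsto (fun κ => v κ 0) atTop (nhds L0) :=
    tendsto_atTop_ciSup hmono0 ⟨1, by rintro x ⟨κ, rfl⟩; exact hbdd κ 0⟩
  have htN : Tendsto (fun κ => v κ (Fin.last N)) atTop (nhds LN) :=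
    tendsto_atTop_ciSup hmonoN ⟨1, by rintro x ⟨κ, rfl⟩; exact hbdd κ _⟩
  -- interior mass decay
  obtain ⟨c, hc0, hc1, hcontr⟩ := intmass_contract M hnonneg hstoch habs0 habsN hminus
  have hgeo : ∀ q : ℕ, ∑ i ∈ intr N, v (N * q) i ≤ c ^ q := by
    intro q
    induction q with
    | zero =>
        simp only [Nat.mul_zero, pow_zero]
        have : v 0 = P₀ := by simp [hvdef]
        rw [this, ← hP₀norm]
        exact Finset.sum_le_sum_of_subset_of_nonneg (Finset.subset_univ _)
          (fun i _ _ => hP₀nonneg i)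
    | succ q ih =>
        have hv' : v (N * (q + 1)) = (M ^ N).mulVec (v (N * q)) := by
          simp only [hvdef]
          rw [Matrix.mulVec_mulVec, ← pow_add]
          ring_nf
        rw [hv', pow_succ]
        calc ∑ i ∈ intr N, (M ^ N).mulVec (v (N * q)) i
            ≤ c * ∑ j ∈ intr N, v (N * q) j := hcontr _ (hvnonneg _)
          _ ≤ c * c ^ q := mul_le_mul_of_nonneg_left ih hc0
          _ = c ^ q * c := mul_comm _ _
  have hintbound : ∀ κ, ∑ i ∈ intr N, v κ i ≤ c ^ (κ / N) := by
    intro κ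
    have hv' : v κ = (M ^ (κ % N)).mulVec (v (N * (κ / N))) := by
      simp only [hvdef]
      rw [Matrix.mulVec_mulVec, ← pow_add, Nat.mod_add_div]
    rw [hv']
    exact le_trans (intmass_iter M hnonneg hstoch habs0 habsN _ _ (hvnonneg _)) (hgeo _)
  have hdiv : Tendsto (fun κ : ℕ => κ / N) atTop atTop := by
    refine tendsto_atTop_atTop.2 fun b => ⟨N * b, fun a ha => ?_⟩
    exact (Nat.le_div_iff_mul_le (by omega)).2 (by rw [Nat.mul_comm] at ha; exact ha)
  have hcpow : Tendsto (fun κ : ℕ => c ^ (κ / N)) atTop (nhds 0) :=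
    (tendsto_pow_atTop_nhds_zero_of_lt_one hc0 hc1).comp hdiv
  have hint0 : Tendsto (fun κ => ∑ i ∈ intr N, v κ i) atTop (nhds 0) :=
    squeeze_zero (fun κ => Finset.sum_nonneg fun i _ => hvnonneg κ i) hintbound hcpow
  have hcomp0 : ∀ i ∈ intr N, Tendsto (fun κ => v κ i) atTop (nhds 0) := by
    intro i hi
    refine squeeze_zero (fun κ => hvnonneg κ i) (fun κ => ?_) hint0
    exact Finset.single_le_sum (fun j _ => hvnonneg κ j) hi
  -- identify limits
  have hkey1 : L0 + LN + 0 = 1 := by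
    refine tendsto_nhds_unique ((ht0.add htN).add hint0) ?_
    have : (fun κ => v κ 0 + v κ (Fin.last N) + ∑ i ∈ intr N, v κ i)
        = fun _ => (1 : ℝ) := by
      funext κ
      rw [← hsplit (v κ), hmass κ]
    rw [this]
    exact tendsto_const_nhds
  have hharm : ∀ κ, ∑ n, F n * v κ n = A := by
    intro κ
    induction κ with
    | zero => simp [hvdef, hA]
    | succ n ih => rw [hsucc n, harm_step M F hF (v n), ih]
  have hintF : Tendsto (fun κ => ∑ i ∈ intr N, F i * v κ i) atTop (nhds 0) := by
    have : Tendsto (fun κ => ∑ i ∈ intr N, F i * v κ i) atTop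
        (nhds (∑ i ∈ intr N, (0 : ℝ))) := by
      refine tendsto_finset_sum _ fun i hi => ?_
      simpa using (hcomp0 i hi).const_mul (F i)
    simpa using this
  have hkey2 : F 0 * L0 + F (Fin.last N) * LN + 0 = A := by
    refine tendsto_nhds_unique (((ht0.const_mul _).add (htN.const_mul _)).add hintF) ?_
    have : (fun κ => F 0 * v κ 0 + F (Fin.last N) * v κ (Fin.last N)
        + ∑ i ∈ intr N, F i * v κ i) = fun κ => A := by
      funext κ
      rw [← hsplit (fun n => F n * v κ n), hharm κ]
    rw [this]
    exact tendsto_const_nhds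
  rw [hF0, hFN, zero_mul, one_mul, zero_add, add_zero] at hkey2
  have hL0eq : L0 = 1 - A := by linarith
  -- assemble
  rw [tendsto_pi_nhds]
  intro i
  by_cases hi0 : i = 0
  · subst hi0
    rw [if_pos rfl, ← hL0eq]
    exact ht0
  · by_cases hiN : i = Fin.last N
    · subst hiN
      rw [if_neg hi0, if_pos rfl, ← hkey2]
      exact htN
    · rw [if_neg hi0, if_neg hiN]
      exact hcomp0 i ((mem_intr i).2 ⟨hi0, hiN⟩)
end

section
/- Let α < 0 < β and let p(t,·) be a weak (distributional) solution on [0,1] of the transport equation ∂_t p = -∂_x( x(1-x)(xα + (1-x)β) p ) with nonnegative initial datum p^0 ∈ L¹([0,1]) of total mass 1 supported in (0,1). Then p(t,·) converges weakly-* as t → ∞ to the Dirac mass δ_{x*}, where x* = β/(β-α). -/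
/-!
Write `c = β / (β - α)`. The velocity
`v x = x (1 - x) (x α + (1 - x) β) = (β - α) x (1 - x) (c - x)` points towards `c`, so
`t ↦ ∫ G dμₜ` is nonincreasing for every `C¹` test function `G` that grows away from `c`.
For `G = (x - c)²` the derivative is `-2 (β - α) ∫ x (1 - x) (x - c)² dμₜ`, so, the second
moment being nonnegative, this weighted moment is as small as we like at some time `t₀`.
For `G` a cutoff equal to `1` near `0` and `1`, the mass near the boundary never exceeds its
initial value, which is small because `μ₀` does not charge `{0, 1}`. Away from the boundary
`x (1 - x) ≥ δ²`, so the second moment is small at `t₀`, hence at all later times. A second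
moment about `c` tending to `0` for measures on `[0, 1]` is weak-* convergence to the Dirac
mass at `c`.
-/

open MeasureTheory Set Filter Topology Real

theorem exists_neg_lt_of_hasDerivAt_of_nonneg {u u' : ℝ → ℝ}
    (hu : ∀ t, 0 ≤ t → HasDerivAt u (u' t) t) (hu₀ : ∀ t, 0 ≤ t → 0 ≤ u t)
    {ε : ℝ} (hε : 0 < ε) : ∃ t, 0 ≤ t ∧ -ε < u' t := by
  -- mean value theorem on `[0, T]`, with `T` so large that `u 0 / T < ε`
  set T := (u 0 + 1) / ε
  have hT : 0 < T := div_pos (by linarith [hu₀ 0 le_rfl]) hε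
  obtain ⟨t, ht, hslope⟩ := exists_hasDerivAt_eq_slope u u' hT
    (continuousOn_of_forall_continuousAt fun s hs => (hu s hs.1).continuousAt)
    (fun s hs => hu s hs.1.le)
  refine ⟨t, ht.1.le, ?_⟩
  rw [hslope, sub_zero, lt_div_iff₀ hT]
  have : ε * T = u 0 + 1 := mul_div_cancel₀ _ hε.ne'
  linarith [hu₀ T hT.le]

theorem antitoneOn_Ici_of_hasDerivAt_nonpos {u u' : ℝ → ℝ} {a : ℝ}
    (hu : ∀ t, a ≤ t → HasDerivAt u (u' t) t) (hu' : ∀ t, a ≤ t → u' t ≤ 0) :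
    AntitoneOn u (Ici a) := by
  refine antitoneOn_of_hasDerivWithinAt_nonpos (convex_Ici a)
    (continuousOn_of_forall_continuousAt fun t ht => (hu t ht).continuousAt) (fun t ht => ?_)
    (fun t ht => hu' t (interior_subset ht))
  exact (hu t (interior_subset ht)).hasDerivWithinAt


section CompactSupport

variable {μ : Measure ℝ} {K : Set ℝ}

theorem Continuous.integrable_of_ae_mem_isCompact [IsFiniteMeasure μ] {f : ℝ → ℝ}
    (hf : Continuous f) (hK : IsCompact K) (hμ : ∀ᵐ x ∂μ, x ∈ K) : Integrable f μ := by
  rw [← Measure.restrict_eq_self_of_ae_mem hμ]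
  exact hf.continuousOn.integrableOn_compact hK

theorem IsCompact.exists_abs_sub_le_add_mul_sq {g : ℝ → ℝ} (hK : IsCompact K) (hg : Continuous g)
    (c : ℝ) {ε : ℝ} (hε : 0 < ε) : ∃ C, ∀ x ∈ K, |g x - g c| ≤ ε + C * (x - c) ^ 2 := by
  obtain ⟨θ, hθ, hnear⟩ := Metric.continuous_iff.mp hg c ε hε
  obtain ⟨M, hM⟩ := hK.exists_bound_of_continuousOn (f := fun x => g x - g c) (by fun_prop)
  refine ⟨|M| / θ ^ 2, fun x hx => ?_⟩
  have hC : 0 ≤ |M| / θ ^ 2 * (x - c) ^ 2 := by positivity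
  rcases lt_or_ge (dist x c) θ with hxc | hxc
  · have := hnear x hxc
    rw [Real.dist_eq] at this
    linarith
  · have hθx : θ ^ 2 ≤ (x - c) ^ 2 := by
      rw [Real.dist_eq] at hxc
      nlinarith [sq_abs (x - c)]
    have : |M| ≤ |M| / θ ^ 2 * (x - c) ^ 2 := by
      rw [div_mul_eq_mul_div, le_div_iff₀ (by positivity)]
      exact mul_le_mul_of_nonneg_left hθx (abs_nonneg M)
    have := hM x hx
    rw [Real.norm_eq_abs] at this
    linarith [le_abs_self M]

theorem tendsto_integral_of_tendsto_integral_sq_sub {ι : Type*} {l : Filter ι}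
    {ν : ι → Measure ℝ} [∀ i, IsProbabilityMeasure (ν i)] (hK : IsCompact K)
    (hν : ∀ i, ∀ᵐ x ∂ν i, x ∈ K) {c : ℝ} (hm : Tendsto (fun i => ∫ x, (x - c) ^ 2 ∂ν i) l (𝓝 0))
    {g : ℝ → ℝ} (hg : Continuous g) : Tendsto (fun i => ∫ x, g x ∂ν i) l (𝓝 (g c)) := by
  rw [Metric.tendsto_nhds]
  intro ε hε
  obtain ⟨C, hC⟩ := hK.exists_abs_sub_le_add_mul_sq hg c (half_pos hε)
  filter_upwards [(hm.const_mul C).eventually_lt_const (show C * 0 < ε / 2 by simpa using hε)]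
    with i hi
  have hint : ∀ {f : ℝ → ℝ}, Continuous f → Integrable f (ν i) :=
    fun hf => hf.integrable_of_ae_mem_isCompact hK (hν i)
  calc dist (∫ x, g x ∂ν i) (g c) = |∫ x, (g x - g c) ∂ν i| := by
        rw [integral_sub (hint hg) (integrable_const _), Real.dist_eq]; simp
    _ ≤ ∫ x, |g x - g c| ∂ν i := abs_integral_le_integral_abs
    _ ≤ ∫ x, (ε / 2 + C * (x - c) ^ 2) ∂ν i := by
        refine integral_mono_ae (hint (by fun_prop)) (hint (by fun_prop)) ?_
        filter_upwards [hν i] with x hx using hC x hx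
    _ = ε / 2 + C * ∫ x, (x - c) ^ 2 ∂ν i := by
        rw [integral_add (integrable_const _) (hint (by fun_prop)), integral_const_mul]; simp
    _ < ε := by linarith

end CompactSupport

section Cutoff

noncomputable def edgeCutoff (δ x : ℝ) : ℝ := smoothTransition (2 - x / δ)

noncomputable def boundaryCutoff (δ x : ℝ) : ℝ := edgeCutoff δ x + edgeCutoff δ (1 - x)

variable {δ x : ℝ}

theorem contDiff_edgeCutoff {n : ℕ∞} : ContDiff ℝ n (edgeCutoff δ) :=
  smoothTransition.contDiff.comp (contDiff_const.sub (contDiff_id.div_const δ))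

theorem edgeCutoff_eq_one (hδ : 0 < δ) (hx : x ≤ δ) : edgeCutoff δ x = 1 :=
  smoothTransition.one_of_one_le (by rw [le_sub_comm, div_le_iff₀ hδ]; linarith)

theorem edgeCutoff_eq_zero (hδ : 0 < δ) (hx : 2 * δ ≤ x) : edgeCutoff δ x = 0 :=
  smoothTransition.zero_of_nonpos (by rw [sub_nonpos, le_div_iff₀ hδ]; linarith)

theorem antitone_edgeCutoff (hδ : 0 ≤ δ) : Antitone (edgeCutoff δ) := fun _ _ hxy =>
  smoothTransition.monotone (sub_le_sub_left (div_le_div_of_nonneg_right hxy hδ) 2)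

theorem deriv_edgeCutoff_eq_zero (hδ : 0 < δ) (hx : 2 * δ < x) : deriv (edgeCutoff δ) x = 0 := by
  have : edgeCutoff δ =ᶠ[𝓝 x] fun _ => 0 := by
    filter_upwards [Ioi_mem_nhds hx] with y hy using edgeCutoff_eq_zero hδ (le_of_lt hy)
  rw [this.deriv_eq, deriv_const]

theorem tendsto_edgeCutoff (hx : 0 < x) : Tendsto (edgeCutoff · x) (𝓝[>] 0) (𝓝 0) := by
  refine tendsto_const_nhds.congr' ?_
  filter_upwards [Ioo_mem_nhdsGT (half_pos hx)] with δ hδ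
  exact (edgeCutoff_eq_zero hδ.1 (by linarith [hδ.2])).symm

theorem contDiff_boundaryCutoff : ContDiff ℝ 1 (boundaryCutoff δ) :=
  contDiff_edgeCutoff.add (contDiff_edgeCutoff.comp (contDiff_const.sub contDiff_id))

theorem boundaryCutoff_nonneg : 0 ≤ boundaryCutoff δ x :=
  add_nonneg (smoothTransition.nonneg _) (smoothTransition.nonneg _)

theorem boundaryCutoff_le_two : boundaryCutoff δ x ≤ 2 := by
  have := smoothTransition.le_one (2 - x / δ)
  have := smoothTransition.le_one (2 - (1 - x) / δ)
  unfold boundaryCutoff edgeCutoff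
  linarith

theorem one_le_boundaryCutoff (hδ : 0 < δ) (hx : x ≤ δ ∨ 1 - δ ≤ x) : 1 ≤ boundaryCutoff δ x := by
  have h₀ := smoothTransition.nonneg (2 - x / δ)
  have h₁ := smoothTransition.nonneg (2 - (1 - x) / δ)
  unfold boundaryCutoff
  rcases hx with hx | hx
  · rw [edgeCutoff_eq_one hδ hx]; exact le_add_of_nonneg_right h₁
  · rw [edgeCutoff_eq_one (x := 1 - x) hδ (by linarith)]; exact le_add_of_nonneg_left h₀

theorem deriv_boundaryCutoff :
    deriv (boundaryCutoff δ) x = deriv (edgeCutoff δ) x - deriv (edgeCutoff δ) (1 - x) := by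
  have hd : Differentiable ℝ (edgeCutoff δ) := contDiff_edgeCutoff.differentiable one_ne_zero
  exact (((hd x).hasDerivAt.add (hd (1 - x)).hasDerivAt.comp_const_sub).deriv).trans
    (sub_eq_add_neg _ _).symm

theorem mul_deriv_boundaryCutoff_nonpos {v : ℝ → ℝ} {c : ℝ} (hδ : 0 < δ) (hδc : 2 * δ < c)
    (hδc' : 2 * δ < 1 - c) (hvx : (x - c) * v x ≤ 0) : v x * deriv (boundaryCutoff δ) x ≤ 0 := by
  have hd₀ := (antitone_edgeCutoff hδ.le).deriv_nonpos (x := x)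
  have hd₁ := (antitone_edgeCutoff hδ.le).deriv_nonpos (x := 1 - x)
  rw [deriv_boundaryCutoff]
  rcases le_or_gt x (2 * δ) with hx | hx
  · rw [deriv_edgeCutoff_eq_zero hδ (by linarith : 2 * δ < 1 - x), sub_zero]
    exact mul_nonpos_of_nonneg_of_nonpos (nonneg_of_mul_nonpos_right hvx (by linarith)) hd₀
  rw [deriv_edgeCutoff_eq_zero hδ hx, zero_sub]
  rcases le_or_gt (1 - x) (2 * δ) with hx' | hx'
  · exact mul_nonpos_of_nonpos_of_nonneg (nonpos_of_mul_nonpos_right hvx (by linarith))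
      (neg_nonneg.2 hd₁)
  · rw [deriv_edgeCutoff_eq_zero hδ hx', neg_zero, mul_zero]

theorem tendsto_boundaryCutoff (hx : x ∈ Ioo 0 1) :
    Tendsto (boundaryCutoff · x) (𝓝[>] 0) (𝓝 0) := by
  simpa [boundaryCutoff] using (tendsto_edgeCutoff hx.1).add (tendsto_edgeCutoff (sub_pos.2 hx.2))

theorem sq_sub_le_boundaryCutoff_add {c : ℝ} (hc : c ∈ Icc (0 : ℝ) 1) (hx : x ∈ Icc (0 : ℝ) 1)
    (hδ : 0 < δ) : (x - c) ^ 2 ≤ boundaryCutoff δ x + x * (1 - x) * (x - c) ^ 2 / δ ^ 2 := by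
  obtain ⟨hx₀, hx₁⟩ := hx
  have hw : 0 ≤ x * (1 - x) * (x - c) ^ 2 / δ ^ 2 := by
    have := sub_nonneg.2 hx₁
    positivity
  by_cases hb : x ≤ δ ∨ 1 - δ ≤ x
  · nlinarith [one_le_boundaryCutoff hδ hb, hc.1, hc.2]
  · rw [not_or, not_le, not_le] at hb
    have hδx : δ ^ 2 ≤ x * (1 - x) := by nlinarith
    have : (x - c) ^ 2 ≤ x * (1 - x) * (x - c) ^ 2 / δ ^ 2 := by
      rw [le_div_iff₀ (by positivity)]
      nlinarith [sq_nonneg (x - c)]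
    linarith [boundaryCutoff_nonneg (δ := δ) (x := x)]

end Cutoff

/-- `μ` solves the transport equation `∂ₜμ + ∂ₓ(v μ) = 0` weakly for `t ≥ 0`. -/
def IsWeakSolution (v : ℝ → ℝ) (μ : ℝ → Measure ℝ) : Prop :=
  ∀ g : ℝ → ℝ, ContDiff ℝ 1 g → ∀ t : ℝ, 0 ≤ t →
    HasDerivAt (fun s => ∫ x, g x ∂μ s) (∫ x, v x * deriv g x ∂μ t) t

namespace IsWeakSolution

variable {v : ℝ → ℝ} {μ : ℝ → Measure ℝ} {c : ℝ}

theorem antitoneOn_integral (h : IsWeakSolution v μ) (hμ : ∀ t, ∀ᵐ x ∂μ t, x ∈ Icc (0 : ℝ) 1)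
    {G : ℝ → ℝ} (hG : ContDiff ℝ 1 G) (hvG : ∀ x ∈ Icc (0 : ℝ) 1, v x * deriv G x ≤ 0) :
    AntitoneOn (fun t => ∫ x, G x ∂μ t) (Ici 0) :=
  antitoneOn_Ici_of_hasDerivAt_nonpos (h G hG) fun t _ =>
    integral_nonpos_of_ae (by filter_upwards [hμ t] with x hx using hvG x hx)

theorem hasDerivAt_integral_sq_sub (h : IsWeakSolution v μ) (c : ℝ) {t : ℝ} (ht : 0 ≤ t) :
    HasDerivAt (fun s => ∫ x, (x - c) ^ 2 ∂μ s) (∫ x, 2 * ((x - c) * v x) ∂μ t) t := by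
  convert h (fun x => (x - c) ^ 2) (by fun_prop) t ht using 3 with x
  simp [mul_left_comm, mul_comm, mul_assoc]

variable [∀ t, IsFiniteMeasure (μ t)]

theorem integral_two_mul_sub_mul_le (hμ : ∀ t, ∀ᵐ x ∂μ t, x ∈ Icc (0 : ℝ) 1) (hv : Continuous v)
    {k : ℝ}
    (hvk : ∀ x ∈ Icc (0 : ℝ) 1, (x - c) * v x ≤ -(k * (x * (1 - x) * (x - c) ^ 2))) (t : ℝ) :
    ∫ x, 2 * ((x - c) * v x) ∂μ t ≤ -(2 * k * ∫ x, x * (1 - x) * (x - c) ^ 2 ∂μ t) := by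
  have hint : ∀ {f : ℝ → ℝ}, Continuous f → Integrable f (μ t) :=
    fun hf => hf.integrable_of_ae_mem_isCompact isCompact_Icc (hμ t)
  rw [← integral_const_mul, ← integral_neg]
  refine integral_mono_ae (hint (by fun_prop)) (hint (by fun_prop)) ?_
  filter_upwards [hμ t] with x hx
  linarith [hvk x hx]

theorem exists_integral_mul_one_sub_mul_sq_lt (h : IsWeakSolution v μ)
    (hμ : ∀ t, ∀ᵐ x ∂μ t, x ∈ Icc (0 : ℝ) 1)
    (hv : Continuous v) {k : ℝ} (hk : 0 < k)
    (hvk : ∀ x ∈ Icc (0 : ℝ) 1, (x - c) * v x ≤ -(k * (x * (1 - x) * (x - c) ^ 2)))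
    {ε : ℝ} (hε : 0 < ε) : ∃ t, 0 ≤ t ∧ ∫ x, x * (1 - x) * (x - c) ^ 2 ∂μ t < ε := by
  obtain ⟨t, ht, hlt⟩ := exists_neg_lt_of_hasDerivAt_of_nonneg
    (fun t ht => h.hasDerivAt_integral_sq_sub c ht)
    (fun t _ => integral_nonneg fun x => sq_nonneg (x - c)) (by positivity : 0 < 2 * k * ε)
  refine ⟨t, ht, lt_of_mul_lt_mul_left ?_ (by positivity : 0 ≤ 2 * k)⟩
  linarith [integral_two_mul_sub_mul_le hμ hv hvk t]

theorem exists_integral_boundaryCutoff_le (h : IsWeakSolution v μ)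
    (hμ : ∀ t, ∀ᵐ x ∂μ t, x ∈ Icc (0 : ℝ) 1) (h₀ : ∀ᵐ x ∂μ 0, x ∈ Ioo (0 : ℝ) 1)
    (hc : c ∈ Ioo (0 : ℝ) 1) (hvc : ∀ x ∈ Icc (0 : ℝ) 1, (x - c) * v x ≤ 0) {η : ℝ} (hη : 0 < η) :
    ∃ δ, 0 < δ ∧ ∀ t, 0 ≤ t → ∫ x, boundaryCutoff δ x ∂μ t ≤ η := by
  have hlim : Tendsto (fun δ => ∫ x, boundaryCutoff δ x ∂μ 0) (𝓝[>] 0) (𝓝 0) := by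
    simpa using tendsto_integral_filter_of_dominated_convergence (f := fun _ => 0) (fun _ => 2)
      (Eventually.of_forall fun _ => contDiff_boundaryCutoff.continuous.aestronglyMeasurable)
      (Eventually.of_forall fun _ => Eventually.of_forall fun _ => by
        rw [Real.norm_of_nonneg boundaryCutoff_nonneg]; exact boundaryCutoff_le_two)
      (integrable_const 2) (by filter_upwards [h₀] with x hx using tendsto_boundaryCutoff hx)
  have hc' : 0 < min c (1 - c) := lt_min hc.1 (sub_pos.2 hc.2)
  obtain ⟨δ, hδη, hδ₀, hδ⟩ :=
    ((hlim.eventually_lt_const hη).and (Ioo_mem_nhdsGT (half_pos hc'))).exists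
  have hanti := h.antitoneOn_integral hμ contDiff_boundaryCutoff fun x hx =>
    mul_deriv_boundaryCutoff_nonpos hδ₀ (by linarith [min_le_left c (1 - c)])
      (by linarith [min_le_right c (1 - c)]) (hvc x hx)
  exact ⟨δ, hδ₀, fun t ht => (hanti self_mem_Ici ht ht).trans hδη.le⟩

theorem tendsto_integral_sq_sub (h : IsWeakSolution v μ)
    (hμ : ∀ t, ∀ᵐ x ∂μ t, x ∈ Icc (0 : ℝ) 1) (h₀ : ∀ᵐ x ∂μ 0, x ∈ Ioo (0 : ℝ) 1)
    (hv : Continuous v) {k : ℝ} (hk : 0 < k)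
    (hvk : ∀ x ∈ Icc (0 : ℝ) 1, (x - c) * v x ≤ -(k * (x * (1 - x) * (x - c) ^ 2)))
    (hc : c ∈ Ioo (0 : ℝ) 1) : Tendsto (fun t => ∫ x, (x - c) ^ 2 ∂μ t) atTop (𝓝 0) := by
  have hvc : ∀ x ∈ Icc (0 : ℝ) 1, (x - c) * v x ≤ 0 := fun x hx =>
    (hvk x hx).trans (neg_nonpos.2 (mul_nonneg hk.le
      (mul_nonneg (mul_nonneg hx.1 (sub_nonneg.2 hx.2)) (sq_nonneg _))))
  have hanti : AntitoneOn (fun t => ∫ x, (x - c) ^ 2 ∂μ t) (Ici 0) :=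
    antitoneOn_Ici_of_hasDerivAt_nonpos (fun t ht => h.hasDerivAt_integral_sq_sub c ht) fun t _ =>
      integral_nonpos_of_ae (by
        filter_upwards [hμ t] with x hx using mul_nonpos_of_nonneg_of_nonpos zero_le_two (hvc x hx))
  refine tendsto_order.2 ⟨fun a ha => Eventually.of_forall fun t =>
    ha.trans_le (integral_nonneg fun x => sq_nonneg _), fun ε hε => ?_⟩
  obtain ⟨δ, hδ, hB⟩ := h.exists_integral_boundaryCutoff_le hμ h₀ hc hvc (half_pos hε)
  obtain ⟨t₀, ht₀, hW⟩ :=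
    h.exists_integral_mul_one_sub_mul_sq_lt hμ hv hk hvk (by positivity : 0 < ε / 2 * δ ^ 2)
  have hint : ∀ {f : ℝ → ℝ}, Continuous f → Integrable f (μ t₀) :=
    fun hf => hf.integrable_of_ae_mem_isCompact isCompact_Icc (hμ t₀)
  have hm : ∫ x, (x - c) ^ 2 ∂μ t₀ < ε := calc
    _ ≤ ∫ x, (boundaryCutoff δ x + x * (1 - x) * (x - c) ^ 2 / δ ^ 2) ∂μ t₀ := by
        refine integral_mono_ae (hint (by fun_prop))
          (hint (contDiff_boundaryCutoff.continuous.add (by fun_prop))) ?_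
        filter_upwards [hμ t₀] with x hx
          using sq_sub_le_boundaryCutoff_add (Ioo_subset_Icc_self hc) hx hδ
    _ = ∫ x, boundaryCutoff δ x ∂μ t₀ + (∫ x, x * (1 - x) * (x - c) ^ 2 ∂μ t₀) / δ ^ 2 := by
        rw [integral_add (hint contDiff_boundaryCutoff.continuous) (hint (by fun_prop)),
          integral_div]
    _ < ε := by
        have := (div_lt_iff₀ (by positivity : (0 : ℝ) < δ ^ 2)).2 hW
        linarith [hB t₀ ht₀]
  filter_upwards [eventually_ge_atTop t₀] with t ht
  exact (hanti (mem_Ici.2 ht₀) (mem_Ici.2 (ht₀.trans ht)) ht).trans_lt hm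

end IsWeakSolution

def replicatorField (α β x : ℝ) : ℝ := x * (1 - x) * (x * α + (1 - x) * β)

theorem sub_mul_replicatorField {α β : ℝ} (h : β - α ≠ 0) (x : ℝ) :
    (x - β / (β - α)) * replicatorField α β x =
      -((β - α) * (x * (1 - x) * (x - β / (β - α)) ^ 2)) := by
  unfold replicatorField
  field_simp
  ring

theorem transport_converges_to_dirac_general
    (α β : ℝ) (hα : α < 0) (hβ : 0 < β)
    (μ : ℝ → Measure ℝ)
    (hprob : ∀ t, IsProbabilityMeasure (μ t))
    (hsupp : ∀ t, μ t (Set.Icc (0:ℝ) 1)ᶜ = 0)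
    (hinit_supp : μ 0 (Set.Ioo (0:ℝ) 1)ᶜ = 0)
    (hweak : ∀ g : ℝ → ℝ, ContDiff ℝ 1 g → ∀ t : ℝ, 0 ≤ t →
      HasDerivAt (fun s => ∫ x, g x ∂(μ s))
        (∫ x, x * (1 - x) * (x * α + (1 - x) * β) * deriv g x ∂(μ t)) t) :
    ∀ g : ℝ → ℝ, Continuous g →
      Filter.Tendsto (fun t => ∫ x, g x ∂(μ t)) Filter.atTop
        (nhds (g (β / (β - α)))) := by
  intro g hg
  have hαβ : 0 < β - α := by linarith
  have hc : β / (β - α) ∈ Ioo (0 : ℝ) 1 := ⟨div_pos hβ hαβ, (div_lt_one hαβ).2 (by linarith)⟩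
  have hμ : ∀ t, ∀ᵐ x ∂μ t, x ∈ Icc (0 : ℝ) 1 := fun t => mem_ae_iff.2 (hsupp t)
  have hsol : IsWeakSolution (replicatorField α β) μ := hweak
  have hm := hsol.tendsto_integral_sq_sub hμ (mem_ae_iff.2 hinit_supp)
    (by unfold replicatorField; fun_prop) hαβ (fun x _ => (sub_mul_replicatorField hαβ.ne' x).le) hc
  exact tendsto_integral_of_tendsto_integral_sq_sub isCompact_Icc hμ hm hg

/-- Weak-* convergence to a Dirac mass at the interior equilibrium
`x* = β/(β-α)` for weak measure-valued solutions of the transport equation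
`∂_t p = -∂_x( x(1-x)(xα+(1-x)β) p )` with absolutely continuous initial datum
of mass one supported in `(0,1)`. -/
theorem transport_converges_to_dirac
    (α β : ℝ) (hα : α < 0) (hβ : 0 < β)
    (μ : ℝ → Measure ℝ)
    (hprob : ∀ t, IsProbabilityMeasure (μ t))
    (hsupp : ∀ t, μ t (Set.Icc (0:ℝ) 1)ᶜ = 0)
    (hinit_ac : μ 0 ≪ volume)
    (hinit_supp : μ 0 (Set.Ioo (0:ℝ) 1)ᶜ = 0)
    (hweak : ∀ g : ℝ → ℝ, ContDiff ℝ 1 g → ∀ t : ℝ, 0 ≤ t →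
      HasDerivAt (fun s => ∫ x, g x ∂(μ s))
        (∫ x, x * (1 - x) * (x * α + (1 - x) * β) * deriv g x ∂(μ t)) t) :
    ∀ g : ℝ → ℝ, Continuous g →
      Filter.Tendsto (fun t => ∫ x, g x ∂(μ t)) Filter.atTop
        (nhds (g (β / (β - α)))) :=
  transport_converges_to_dirac_general α β hα hβ μ hprob hsupp hinit_supp hweak
end

section
/- Let q_ε be a smooth solution on [0,1] of ∂_t q_ε = ε ∂²_x( x(1-x) q_ε ) - ∂_x( x(1-x)(x(α-β)+β) q_ε ). Then one has the a priori estimate (1/2) d/dt ∫_0^1 x(1-x) q_ε² dx ≤ ((β-α)/8) ∫_0^1 x(1-x) q_ε² dx, uniformly in ε > 0. Consequently ∫_0^1 x(1-x) q_ε(t,x)² dx ≤ e^{((β-α)/4) t} ∫_0^1 x(1-x) q_ε(0,x)² dx. -/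
open MeasureTheory Set Real

/-! Write `u = x(1-x) q`, so that the equation reads `∂ₜq = ε u'' - ((x(α-β)+β) u)'`. Since `u`
vanishes at both endpoints, two integrations by parts give the energy identity
`d/dt ∫ x(1-x) q² = ∫ 2u ∂ₜq = -2ε ∫ u'² + (β-α) ∫ u²`. The first term has a sign for every
`ε ≥ 0`, and `x(1-x) ≤ 1/4` bounds `∫ u²` by `¼ ∫ x(1-x) q²`; Grönwall's inequality then turns
the differential inequality into the exponential bound. -/

theorem hasDerivAt_intervalIntegral_of_contDiff {F : ℝ → ℝ → ℝ}
    (hF : ContDiff ℝ 1 (fun z : ℝ × ℝ => F z.1 z.2)) (a b t₀ : ℝ) :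
    HasDerivAt (fun t => ∫ x in a..b, F t x)
      (∫ x in a..b, deriv (fun t => F t x) t₀) t₀ := by
  set dtF : ℝ → ℝ → ℝ := fun t x => fderiv ℝ (fun z : ℝ × ℝ => F z.1 z.2) (t, x) (1, 0)
  have hpartial (t x : ℝ) : HasDerivAt (fun s => F s x) (dtF t x) t := by
    have hline : HasDerivAt (fun s : ℝ => (s, x)) (1, 0) t :=
      (hasDerivAt_id t).prodMk (hasDerivAt_const t x)
    exact (hF.differentiable one_ne_zero (t, x)).hasFDerivAt.comp_hasDerivAt t hline
  have hcont : Continuous fun z : ℝ × ℝ => dtF z.1 z.2 :=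
    (hF.continuous_fderiv one_ne_zero).clm_apply continuous_const
  obtain ⟨C, hC⟩ := ((isCompact_closedBall t₀ 1).prod (isCompact_uIcc (a := a) (b := b))
    ).exists_bound_of_continuousOn hcont.continuousOn
  have hFx (t : ℝ) : Continuous (F t) :=
    hF.continuous.comp (continuous_const.prodMk continuous_id)
  have h := intervalIntegral.hasDerivAt_integral_of_dominated_loc_of_deriv_le (μ := volume)
    (bound := fun _ => C)
    (Metric.closedBall_mem_nhds t₀ one_pos)
    (.of_forall fun t => (hFx t).aestronglyMeasurable) ((hFx t₀).intervalIntegrable a b)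
    (hcont.comp (continuous_const.prodMk continuous_id)).aestronglyMeasurable
    (.of_forall fun x hx t ht => hC (t, x) ⟨ht, uIoc_subset_uIcc hx⟩) intervalIntegrable_const
    (.of_forall fun x _ t _ => hpartial t x)
  simpa only [fun x => (hpartial t₀ x).deriv] using h.2

theorem le_exp_mul_of_hasDerivAt_le_mul {f f' : ℝ → ℝ} {K a b : ℝ} (hab : a ≤ b)
    (hf : ∀ t ∈ Icc a b, HasDerivAt f (f' t) t) (hbound : ∀ t ∈ Ico a b, f' t ≤ K * f t) :
    f b ≤ exp (K * (b - a)) * f a := by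
  have h := le_gronwallBound_of_liminf_deriv_right_le (ε := 0) (δ := f a)
    (fun t ht => (hf t ht).continuousAt.continuousWithinAt)
    (fun t ht r hr => ((hf t (Ico_subset_Icc_self ht)).hasDerivWithinAt.liminf_right_slope_le hr))
    le_rfl (by simpa using hbound) b (right_mem_Icc.2 hab)
  rwa [gronwallBound_ε0, mul_comm] at h


section IntegrationByParts

variable {u c : ℝ → ℝ} {a b : ℝ}

theorem integral_mul_deriv_deriv_of_eq_zero (hu : ContDiff ℝ 2 u) (ha : u a = 0) (hb : u b = 0) :
    ∫ x in a..b, u x * deriv (deriv u) x = -∫ x in a..b, deriv u x ^ 2 := by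
  have hu' : ContDiff ℝ 1 (deriv u) := hu.iterate_deriv' 1 1
  rw [intervalIntegral.integral_mul_deriv_eq_deriv_mul
    (fun x _ => (hu.differentiable two_ne_zero x).hasDerivAt)
    (fun x _ => (hu'.differentiable one_ne_zero x).hasDerivAt)
    (hu'.continuous.intervalIntegrable a b) ((hu'.continuous_deriv le_rfl).intervalIntegrable a b),
    ha, hb]
  simp [sq]

theorem integral_two_mul_mul_deriv_mul_of_eq_zero (hu : ContDiff ℝ 1 u) (hc : ContDiff ℝ 1 c)
    (ha : u a = 0) (hb : u b = 0) :
    ∫ x in a..b, 2 * u x * deriv (fun y => c y * u y) x = ∫ x in a..b, deriv c x * u x ^ 2 := by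
  have hDu (x : ℝ) : HasDerivAt u (deriv u x) x := (hu.differentiable one_ne_zero x).hasDerivAt
  have hDc (x : ℝ) : HasDerivAt c (deriv c x) x := (hc.differentiable one_ne_zero x).hasDerivAt
  have hcc' : Continuous (deriv c) := hc.continuous_deriv le_rfl
  have hDu2 (x : ℝ) : HasDerivAt (fun y => u y ^ 2) (2 * u x * deriv u x) x := by
    simpa [mul_comm] using (hDu x).fun_pow 2
  have hDcu (x : ℝ) : HasDerivAt (fun y => c y * u y) (deriv c x * u x + c x * deriv u x) x :=
    (hDc x).mul (hDu x)
  have hibp : ∫ x in a..b, c x * (2 * u x * deriv u x) = -∫ x in a..b, deriv c x * u x ^ 2 := by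
    rw [intervalIntegral.integral_mul_deriv_eq_deriv_mul (fun x _ => hDc x) (fun x _ => hDu2 x)
      (hcc'.intervalIntegrable a b) ((by fun_prop : Continuous _).intervalIntegrable a b), ha, hb]
    simp
  calc ∫ x in a..b, 2 * u x * deriv (fun y => c y * u y) x
      = ∫ x in a..b, 2 * (deriv c x * u x ^ 2) + c x * (2 * u x * deriv u x) := by
        refine intervalIntegral.integral_congr fun x _ => ?_
        simp only [(hDcu x).deriv]
        ring
    _ = ∫ x in a..b, deriv c x * u x ^ 2 := by
        rw [intervalIntegral.integral_add, intervalIntegral.integral_const_mul, hibp]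
        · ring
        all_goals exact (by fun_prop : Continuous _).intervalIntegrable a b

end IntegrationByParts

noncomputable def degenerateDriftDiffusion (ε α β : ℝ) (f : ℝ → ℝ) (x : ℝ) : ℝ :=
  ε * deriv (deriv (fun y => y * (1 - y) * f y)) x -
    deriv (fun y => y * (1 - y) * (y * (α - β) + β) * f y) x

section EnergyEstimate

variable {ε α β : ℝ} {f : ℝ → ℝ}

theorem integral_weight_mul_degenerateDriftDiffusion (hf : ContDiff ℝ 2 f) :
    ∫ x in (0:ℝ)..1, x * (1 - x) * (2 * f x * degenerateDriftDiffusion ε α β f x) =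
      -(2 * ε) * (∫ x in (0:ℝ)..1, deriv (fun y => y * (1 - y) * f y) x ^ 2) +
        (β - α) * ∫ x in (0:ℝ)..1, (x * (1 - x) * f x) ^ 2 := by
  set u : ℝ → ℝ := fun y => y * (1 - y) * f y
  set c : ℝ → ℝ := fun y => y * (α - β) + β
  have hu : ContDiff ℝ 2 u := by fun_prop
  have hc : ContDiff ℝ 1 c := by fun_prop
  have hc' : deriv c = fun _ => α - β := by
    ext x
    simp [c]
  have hflux : (fun y => y * (1 - y) * (y * (α - β) + β) * f y) = fun y => c y * u y := by
    ext y; ring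
  have hu0 : u 0 = 0 := by simp [u]
  have hu1 : u 1 = 0 := by simp [u]
  calc ∫ x in (0:ℝ)..1, x * (1 - x) * (2 * f x * degenerateDriftDiffusion ε α β f x)
      = ∫ x in (0:ℝ)..1, 2 * ε * (u x * deriv (deriv u) x) -
          2 * u x * deriv (fun y => c y * u y) x := by
        refine intervalIntegral.integral_congr fun x _ => ?_
        simp only [degenerateDriftDiffusion, hflux, u]
        ring
    _ = -(2 * ε) * (∫ x in (0:ℝ)..1, deriv u x ^ 2) + (β - α) * ∫ x in (0:ℝ)..1, u x ^ 2 := by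
        rw [intervalIntegral.integral_sub, intervalIntegral.integral_const_mul,
          integral_mul_deriv_deriv_of_eq_zero hu hu0 hu1,
          integral_two_mul_mul_deriv_mul_of_eq_zero (hu.of_le one_le_two) hc hu0 hu1, hc',
          intervalIntegral.integral_const_mul]
        · ring
        · exact (by fun_prop : Continuous _).intervalIntegrable 0 1
        · exact ((continuous_const.mul hu.continuous).mul
            ((hc.mul (hu.of_le one_le_two)).continuous_deriv le_rfl)).intervalIntegrable 0 1

theorem integral_sq_weight_mul_le (hf : Continuous f) :
    ∫ x in (0:ℝ)..1, (x * (1 - x) * f x) ^ 2 ≤ 1 / 4 * ∫ x in (0:ℝ)..1, x * (1 - x) * f x ^ 2 := by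
  rw [← intervalIntegral.integral_const_mul]
  refine intervalIntegral.integral_mono_on zero_le_one
    ((by fun_prop : Continuous _).intervalIntegrable 0 1)
    ((by fun_prop : Continuous _).intervalIntegrable 0 1) fun x hx => ?_
  have hw : 0 ≤ x * (1 - x) := mul_nonneg hx.1 (sub_nonneg.2 hx.2)
  have hw' : x * (1 - x) ≤ 1 / 4 := by nlinarith [sq_nonneg (x - 1 / 2)]
  calc (x * (1 - x) * f x) ^ 2 = x * (1 - x) * (x * (1 - x) * f x ^ 2) := by ring
    _ ≤ 1 / 4 * (x * (1 - x) * f x ^ 2) := by gcongr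

theorem integral_weight_mul_degenerateDriftDiffusion_le (hε : 0 ≤ ε) (hαβ : α ≤ β)
    (hf : ContDiff ℝ 2 f) :
    ∫ x in (0:ℝ)..1, x * (1 - x) * (2 * f x * degenerateDriftDiffusion ε α β f x) ≤
      (β - α) / 4 * ∫ x in (0:ℝ)..1, x * (1 - x) * f x ^ 2 := by
  rw [integral_weight_mul_degenerateDriftDiffusion hf]
  have hdiss : 0 ≤ ∫ x in (0:ℝ)..1, deriv (fun y => y * (1 - y) * f y) x ^ 2 :=
    intervalIntegral.integral_nonneg zero_le_one fun x _ => sq_nonneg _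
  have hprod := mul_le_mul_of_nonneg_left (integral_sq_weight_mul_le hf.continuous)
    (sub_nonneg.2 hαβ)
  nlinarith

end EnergyEstimate

/-- A priori estimate, uniform in `ε > 0`, for smooth solutions of
`∂_t q_ε = ε ∂²_x(x(1-x)q_ε) - ∂_x(x(1-x)(x(α-β)+β) q_ε)`:
`(1/2) d/dt ∫ x(1-x) q_ε² ≤ ((β-α)/8) ∫ x(1-x) q_ε²`, and consequently
`∫ x(1-x) q_ε(t)² ≤ e^{((β-α)/4)t} ∫ x(1-x) q_ε(0)²`. -/
theorem apriori_estimate_uniform_in_eps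
    (α β : ℝ) (hα : α < 0) (hβ : 0 < β) (ε : ℝ) (hε : 0 < ε)
    (q : ℝ → ℝ → ℝ)
    (hreg : ContDiff ℝ 2 (fun z : ℝ × ℝ => q z.1 z.2))
    (hpde : ∀ t : ℝ, 0 ≤ t → ∀ x ∈ Set.Icc (0:ℝ) 1,
      HasDerivAt (fun s => q s x)
        (ε * deriv (deriv (fun y => y * (1 - y) * q t y)) x -
          deriv (fun y => y * (1 - y) * (y * (α - β) + β) * q t y) x) t) :
    (∀ t : ℝ, 0 ≤ t →
      (1 / 2) * deriv (fun s => ∫ x in (0:ℝ)..1, x * (1 - x) * q s x ^ 2) t ≤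
        ((β - α) / 8) * ∫ x in (0:ℝ)..1, x * (1 - x) * q t x ^ 2) ∧
    (∀ t : ℝ, 0 ≤ t →
      ∫ x in (0:ℝ)..1, x * (1 - x) * q t x ^ 2 ≤
        Real.exp (((β - α) / 4) * t) * ∫ x in (0:ℝ)..1, x * (1 - x) * q 0 x ^ 2) := by
  set E : ℝ → ℝ := fun s => ∫ x in (0:ℝ)..1, x * (1 - x) * q s x ^ 2
  set E' : ℝ → ℝ := fun t => ∫ x in (0:ℝ)..1, deriv (fun s => x * (1 - x) * q s x ^ 2) t
  have hE (t : ℝ) : HasDerivAt E (E' t) t :=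
    hasDerivAt_intervalIntegral_of_contDiff
      ((contDiff_snd.mul (contDiff_const.sub contDiff_snd)).mul ((hreg.of_le one_le_two).pow 2))
      0 1 t
  have hE'_le (t : ℝ) (ht : 0 ≤ t) : E' t ≤ (β - α) / 4 * E t := by
    have hE'_eq : E' t = ∫ x in (0:ℝ)..1,
        x * (1 - x) * (2 * q t x * degenerateDriftDiffusion ε α β (q t) x) := by
      refine intervalIntegral.integral_congr fun x hx => ?_
      rw [uIcc_of_le zero_le_one] at hx
      have hqt : HasDerivAt (fun s => q s x) (degenerateDriftDiffusion ε α β (q t) x) t :=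
        hpde t ht x hx
      rw [((hqt.fun_pow 2).const_mul (x * (1 - x))).deriv]
      ring
    rw [hE'_eq]
    exact integral_weight_mul_degenerateDriftDiffusion_le hε.le (by linarith)
      (hreg.comp (contDiff_const.prodMk contDiff_id))
  refine ⟨fun t ht => ?_, fun t ht => ?_⟩
  · rw [(hE t).deriv]
    linarith [hE'_le t ht]
  · simpa using le_exp_mul_of_hasDerivAt_le_mul ht (fun s _ => hE s)
      (fun s hs => hE'_le s hs.1)
end
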